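/- Let k ≥ 1 be an integer, m a nonzero complex number, and n a positive integer. Writing H_{r}(n) = ∑_{i=1}^{n} 1/i^{r} for the generalized harmonic numbers, the partial sums of the polylogarithm satisfy: ∑_{j=1}^{n} e^{mj}/j^{k} = e^{mn}/(2n^{k}) - (1/(2n^{k})) ∑_{j=0}^{k} (mn)^{j}/j! + ∑_{j=1}^{k} (m^{k-j}/(k-j)!)·H_{j}(n) + (m^{k}/(2(k-1)!)) ∫_{0}^{1} (1-u)^{k-1}·( e^{mnu} - 1 )·coth(mu/2) du. -/

import Mathlib

open Complex

/-- The complex hyperbolic cotangent, `coth z = cosh z / sinh z`. -/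
noncomputable def Complex.coth (z : ℂ) : ℂ := Complex.cosh z / Complex.sinh z

/-!
With `x = e^{mu}`, the identity `(x^n - 1)(x + 1) = (2 ∑_{j=1}^n x^j + 1 - x^n)(x - 1)` turns the
integrand into `(1-u)^{k-1} (2 ∑_{j=1}^n e^{mju} + 1 - e^{mnu})` away from the countably many
zeros of `sinh (mu/2)`. Each `∫₀¹ (1-u)^{k-1} e^{au} du` is the integral form of the Taylor
remainder `(k-1)!/a^k · (e^a - ∑_{l<k} a^l/l!)`, and expanding the Taylor polynomials at `a = mj`
and summing over `j` produces the generalized harmonic numbers.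
-/

open intervalIntegral Finset

lemma pow_sub_one_mul_add_one {R : Type*} [CommRing R] (x : R) (n : ℕ) :
    (x ^ n - 1) * (x + 1) = (2 * ∑ j ∈ Icc 1 n, x ^ j + 1 - x ^ n) * (x - 1) := by
  induction n with
  | zero => simp
  | succ n ih =>
    rw [sum_Icc_succ_top (by omega), pow_succ]
    linear_combination ih

namespace Complex

lemma countable_setOf_sinh_eq_zero : {z : ℂ | sinh z = 0}.Countable := by
  refine (Set.countable_range fun k : ℤ => (k * Real.pi : ℂ) / I).mono fun z hz => ?_
  obtain ⟨k, hk⟩ := sin_eq_zero_iff.mp (show sin (z * I) = 0 by rw [sin_mul_I, hz, zero_mul])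
  exact ⟨k, (eq_div_of_mul_eq I_ne_zero hk).symm⟩

lemma exp_nat_mul_sub_one_mul_coth {z : ℂ} (hz : sinh (z / 2) ≠ 0) (n : ℕ) :
    (exp (n * z) - 1) * coth (z / 2) = 2 * ∑ j ∈ Icc 1 n, exp (j * z) + 1 - exp (n * z) := by
  have hsq : exp z = exp (z / 2) * exp (z / 2) := by rw [← exp_add, add_halves]
  have hcancel : exp (-(z / 2)) * exp (z / 2) = 1 := by rw [← exp_add, neg_add_cancel, exp_zero]
  have hsub : exp z - 1 = 2 * sinh (z / 2) * exp (z / 2) := by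
    rw [two_sinh, sub_mul, hcancel, hsq]
  have hadd : exp z + 1 = 2 * cosh (z / 2) * exp (z / 2) := by
    rw [two_cosh, add_mul, hcancel, hsq]
  have key := pow_sub_one_mul_add_one (exp z) n
  rw [hsub, hadd] at key
  simp_rw [exp_nat_mul]
  rw [coth, ← mul_div_assoc, div_eq_iff hz]
  refine mul_right_cancel₀ (mul_ne_zero two_ne_zero (exp_ne_zero (z / 2))) ?_
  linear_combination key

end Complex

lemma integral_one_sub_pow_mul_exp_recurrence (a : ℂ) (K : ℕ) :
    (K + 1) * (∫ u in (0 : ℝ)..1, (1 - (u : ℂ)) ^ K * exp (a * u))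
      - a * ∫ u in (0 : ℝ)..1, (1 - (u : ℂ)) ^ (K + 1) * exp (a * u) = 1 := by
  have hderiv : ∀ u ∈ Set.uIcc (0 : ℝ) 1,
      HasDerivAt (fun u : ℝ => -((1 - (u : ℂ)) ^ (K + 1) * exp (a * u)))
        ((K + 1) * ((1 - (u : ℂ)) ^ K * exp (a * u))
          - a * ((1 - (u : ℂ)) ^ (K + 1) * exp (a * u))) u := by
    intro u _
    have := (((((hasDerivAt_id' (u : ℂ)).const_sub 1).fun_pow (K + 1)).fun_mul
      ((hasDerivAt_id' (u : ℂ)).const_mul a).cexp).fun_neg).comp_ofReal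
    convert this using 1
    push_cast
    ring
  rw [← integral_const_mul, ← integral_const_mul, ← integral_sub
    (by apply Continuous.intervalIntegrable; fun_prop)
    (by apply Continuous.intervalIntegrable; fun_prop),
    integral_eq_sub_of_hasDerivAt hderiv (by apply Continuous.intervalIntegrable; fun_prop)]
  simp

lemma integral_one_sub_pow (K : ℕ) :
    ∫ u in (0 : ℝ)..1, (1 - (u : ℂ)) ^ K = 1 / (K + 1) := by
  have h := integral_one_sub_pow_mul_exp_recurrence 0 K
  simp only [zero_mul, exp_zero, mul_one, sub_zero] at h
  rw [eq_div_iff (Nat.cast_add_one_ne_zero K), mul_comm, h]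

lemma exp_sub_sum_range_eq_integral (a : ℂ) (K : ℕ) :
    exp a - ∑ l ∈ range (K + 1), a ^ l / l.factorial
      = a ^ (K + 1) / K.factorial * ∫ u in (0 : ℝ)..1, (1 - (u : ℂ)) ^ K * exp (a * u) := by
  induction K with
  | zero =>
    have hderiv : ∀ u ∈ Set.uIcc (0 : ℝ) 1,
        HasDerivAt (fun u : ℝ => exp (a * u)) (a * exp (a * u)) u := by
      intro u _
      have := ((hasDerivAt_id' (u : ℂ)).const_mul a).cexp.comp_ofReal
      convert this using 1
      ring
    simp only [zero_add, range_one, sum_singleton, pow_zero, pow_one, Nat.factorial_zero,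
      Nat.cast_one, div_one, one_mul, ← integral_const_mul]
    rw [integral_eq_sub_of_hasDerivAt hderiv (by apply Continuous.intervalIntegrable; fun_prop)]
    simp
  | succ K ih =>
    have hrec := integral_one_sub_pow_mul_exp_recurrence a K
    generalize (∫ u in (0 : ℝ)..1, (1 - (u : ℂ)) ^ K * exp (a * u)) = J at ih hrec ⊢
    generalize (∫ u in (0 : ℝ)..1, (1 - (u : ℂ)) ^ (K + 1) * exp (a * u)) = J' at hrec ⊢
    rw [sum_range_succ, ← sub_sub, ih, Nat.factorial_succ]
    have hK : (K.factorial : ℂ) ≠ 0 := Nat.cast_ne_zero.mpr K.factorial_ne_zero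
    push_cast
    field_simp
    linear_combination a ^ (K + 1) * hrec

lemma pow_div_factorial_mul_integral_exp_mul {c : ℂ} (hc : c ≠ 0) (m : ℂ) (K : ℕ) :
    m ^ (K + 1) / K.factorial * ∫ u in (0 : ℝ)..1, (1 - (u : ℂ)) ^ K * exp (m * c * u)
      = (exp (m * c) - ∑ l ∈ range (K + 1), (m * c) ^ l / l.factorial) / c ^ (K + 1) := by
  rw [exp_sub_sum_range_eq_integral, mul_pow]
  generalize (∫ u in (0 : ℝ)..1, (1 - (u : ℂ)) ^ K * exp (m * c * u)) = J
  field_simp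

lemma integral_one_sub_pow_mul_exp_sub_one_mul_coth {m : ℂ} (hm : m ≠ 0) (n K : ℕ) :
    ∫ u in (0 : ℝ)..1, (1 - (u : ℂ)) ^ K * (exp (m * n * u) - 1) * coth (m * u / 2)
      = 2 * ∑ j ∈ Icc 1 n, (∫ u in (0 : ℝ)..1, (1 - (u : ℂ)) ^ K * exp (m * j * u))
        + 1 / (K + 1) - ∫ u in (0 : ℝ)..1, (1 - (u : ℂ)) ^ K * exp (m * n * u) := by
  have hnull : ∀ᵐ u : ℝ, sinh (m * u / 2) ≠ 0 := by
    refine MeasureTheory.measure_eq_zero_iff_ae_notMem.mp (Set.Countable.measure_zero ?_ _)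
    refine countable_setOf_sinh_eq_zero.preimage (f := fun u : ℝ => m * u / 2) fun u v huv => ?_
    simpa [hm] using huv
  have hint : ∀ c : ℂ, IntervalIntegrable (fun u : ℝ => (1 - (u : ℂ)) ^ K * exp (c * u))
      MeasureTheory.volume 0 1 := fun c => by
    apply Continuous.intervalIntegrable; fun_prop
  rw [integral_congr_ae (g := fun u : ℝ =>
      2 * ∑ j ∈ Icc 1 n, (1 - (u : ℂ)) ^ K * exp (m * j * u) + (1 - (u : ℂ)) ^ K
        - (1 - (u : ℂ)) ^ K * exp (m * n * u)),
    integral_sub, integral_add, integral_const_mul, integral_finsetSum, integral_one_sub_pow]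
  · exact fun j _ => hint _
  · exact (continuous_const.mul
      (continuous_finsetSum _ fun j _ => by fun_prop)).intervalIntegrable _ _
  · apply Continuous.intervalIntegrable; fun_prop
  · apply Continuous.intervalIntegrable; fun_prop
  · exact hint _
  · filter_upwards [hnull] with u hu _
    have hcomm : ∀ c : ℂ, m * c * u = c * (m * u) := fun c => by ring
    simp_rw [hcomm, mul_assoc _ _ (coth _), exp_nat_mul_sub_one_mul_coth hu, ← mul_sum]
    ring

lemma sum_Icc_sum_range_mul_pow_div_pow {F : Type*} [Field F] [CharZero F] (m : F) (n K : ℕ) :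
    ∑ j ∈ Icc 1 n, (∑ l ∈ range (K + 1), (m * j) ^ l / l.factorial) / (j : F) ^ (K + 1)
      = ∑ j ∈ Icc 1 (K + 1),
          m ^ (K + 1 - j) / (K + 1 - j).factorial * ∑ i ∈ Icc 1 n, 1 / (i : F) ^ j := by
  have hterm : ∀ j ∈ Icc 1 n, ∀ l ∈ range (K + 1),
      (m * j) ^ l / l.factorial / (j : F) ^ (K + 1)
        = m ^ l / l.factorial * (1 / (j : F) ^ (K + 1 - l)) := by
    intro j hj l hl
    have hj : (j : F) ≠ 0 := Nat.cast_ne_zero.mpr (Nat.one_le_iff_ne_zero.mp (mem_Icc.mp hj).1)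
    have hsplit : (j : F) ^ (K + 1) = (j : F) ^ l * (j : F) ^ (K + 1 - l) := by
      rw [← pow_add, Nat.add_sub_cancel' (mem_range.mp hl).le]
    rw [mul_pow, hsplit]
    field_simp
  simp_rw [sum_div]
  rw [sum_congr rfl fun j hj => sum_congr rfl (hterm j hj), sum_comm]
  simp_rw [← mul_sum]
  refine sum_nbij' (K + 1 - ·) (K + 1 - ·) ?_ ?_ ?_ ?_ ?_ <;> intro l hl <;>
    simp only [mem_range, mem_Icc] at hl ⊢
  any_goals omega
  rw [Nat.sub_sub_self hl.le]

theorem stmt_19 (k : ℕ) (hk : 1 ≤ k) (m : ℂ) (hm : m ≠ 0) (n : ℕ) (hn : 0 < n) :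
    ∑ j ∈ Finset.Icc 1 n, Complex.exp (m * j) / (j : ℂ) ^ k =
      Complex.exp (m * n) / (2 * (n : ℂ) ^ k)
      - (1 / (2 * (n : ℂ) ^ k)) *
          ∑ j ∈ Finset.range (k + 1), (m * n) ^ j / (Nat.factorial j)
      + (∑ j ∈ Finset.Icc 1 k,
          (m ^ (k - j) / (Nat.factorial (k - j))) *
            ∑ i ∈ Finset.Icc 1 n, (1 : ℂ) / (i : ℂ) ^ j)
      + (m ^ k / (2 * (Nat.factorial (k - 1)))) *
          ∫ u in (0:ℝ)..1,
            (1 - (u : ℂ)) ^ (k - 1) * (Complex.exp (m * n * u) - 1) *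
              Complex.coth (m * u / 2) := by
  obtain ⟨K, rfl⟩ : ∃ K, k = K + 1 := ⟨k - 1, by omega⟩
  have hsum : m ^ (K + 1) / K.factorial *
      ∑ j ∈ Icc 1 n, (∫ u in (0 : ℝ)..1, (1 - (u : ℂ)) ^ K * exp (m * j * u))
        = ∑ j ∈ Icc 1 n, exp (m * j) / (j : ℂ) ^ (K + 1)
          - ∑ j ∈ Icc 1 n,
              (∑ l ∈ range (K + 1), (m * j) ^ l / l.factorial) / (j : ℂ) ^ (K + 1) := by
    rw [mul_sum, ← sum_sub_distrib]
    refine sum_congr rfl fun j hj => ?_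
    have hj : (j : ℂ) ≠ 0 := Nat.cast_ne_zero.mpr (Nat.one_le_iff_ne_zero.mp (mem_Icc.mp hj).1)
    rw [pow_div_factorial_mul_integral_exp_mul hj, sub_div]
  have hconst : m ^ (K + 1) / (2 * K.factorial) * (1 / (K + 1))
      = 1 / (2 * (n : ℂ) ^ (K + 1)) * ((m * n) ^ (K + 1) / (K + 1).factorial) := by
    have hn₀ : (n : ℂ) ≠ 0 := Nat.cast_ne_zero.mpr hn.ne'
    rw [mul_pow, Nat.factorial_succ]
    push_cast
    field_simp
  rw [Nat.add_sub_cancel, integral_one_sub_pow_mul_exp_sub_one_mul_coth hm, sum_range_succ,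
    ← sum_Icc_sum_range_mul_pow_div_pow]
  linear_combination -hsum - hconst
    + pow_div_factorial_mul_integral_exp_mul (Nat.cast_ne_zero.mpr hn.ne') m K / 2
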